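/- Let c : ℤ² → ℤ be a configuration taking only finitely many values (alphabet A) annihilated by (τ^{v₁} − id) ∘ ⋯ ∘ (τ^{v_m} − id), where v₁, …, v_m ∈ ℤ² are pairwise linearly independent, and let X be the orbit closure of c. Let u be a one-sided direction of determinism of X with ⟨u, v₁⟩ = 0, let k > |⟨u^⊥, v₁⟩| be such that the box B = B_u^k determines cell 0 in X, and write v = v₁. Let c₁, …, c_n ∈ X be pairwise distinct with τ^v(c₁) − c₁ = ⋯ = τ^v(c_n) − c_n, where n is maximal (there is no family of n+1 pairwise distinct configurations in X with pairwise equal images under τ^v − id). Suppose n₁ < n₂ < ⋯ are such that d_i = lim_{j→∞} τ^{n_j · u}(c_i) exists for each i, and let d = d₁. Then the orbit closure of d is deterministic in direction −u. -/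

import Mathlib

/-- Translation of a configuration by `t`: `(Translate t c) n = c (n - t)`. -/
def Translate {A : Type*} (t : ℤ × ℤ) (c : ℤ × ℤ → A) : ℤ × ℤ → A :=
  fun n => c (n - t)

/-- The orbit of a configuration: the set of all its translates. -/
def orbit {A : Type*} (c : ℤ × ℤ → A) : Set (ℤ × ℤ → A) :=
  { d | ∃ t : ℤ × ℤ, d = Translate t c }

/-- The orbit closure: the topological closure of the orbit (in the product
topology of the discrete topology on the alphabet). -/
def orbitClosure {A : Type*} [TopologicalSpace A] (c : ℤ × ℤ → A) : Set (ℤ × ℤ → A) :=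
  closure (orbit c)

/-- The standard inner product on `ℤ²`. -/
def inner2 (x u : ℤ × ℤ) : ℤ := x.1 * u.1 + x.2 * u.2

/-- The discrete half plane in direction `u`. -/
def halfPlane (u : ℤ × ℤ) : Set (ℤ × ℤ) := { x | inner2 x u < 0 }

/-- A set of configurations is deterministic in direction `u`: the contents of a
configuration on the half plane `H_u` determine the whole configuration. -/
def DeterministicIn {A : Type*} (X : Set (ℤ × ℤ → A)) (u : ℤ × ℤ) : Prop :=
  ∀ d ∈ X, ∀ e ∈ X, Set.EqOn d e (halfPlane u) → d = e

/-- The set of `D`-patterns appearing in `c` : restrictions of translates of `c` to `D`. -/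
def patterns {A : Type*} (c : ℤ × ℤ → A) (D : Set (ℤ × ℤ)) : Set (D → A) :=
  { p | ∃ t : ℤ × ℤ, ∀ x : D, p x = Translate t c x }

/-- A configuration is periodic if it is fixed by some non-trivial translation. -/
def Periodic {A : Type*} (c : ℤ × ℤ → A) : Prop :=
  ∃ t : ℤ × ℤ, t ≠ 0 ∧ Translate t c = c

/-- The discrete rectangle `{1,…,n} × {1,…,m}`. -/
def rect (n m : ℕ) : Set (ℤ × ℤ) :=
  { x | 1 ≤ x.1 ∧ x.1 ≤ (n : ℤ) ∧ 1 ≤ x.2 ∧ x.2 ≤ (m : ℤ) }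

/-- The difference operator `τ^v - id`, corresponding to multiplication by the
Laurent polynomial `x^v - 1`. -/
def diffOp (v : ℤ × ℤ) (d : ℤ × ℤ → ℤ) : ℤ × ℤ → ℤ := fun n => d (n - v) - d n

/-- Perpendicular vector: `(n,m)^⊥ = (m,−n)`. -/
def perp (u : ℤ × ℤ) : ℤ × ℤ := (u.2, -u.1)

/-- The discrete box `B_u^k`. -/
def Box (u : ℤ × ℤ) (k : ℤ) : Set (ℤ × ℤ) :=
  { x | -k < inner2 x u ∧ inner2 x u < 0 ∧ -k < inner2 x (perp u) ∧ inner2 x (perp u) < k }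

/-- A subshift: a set of configurations closed in the product topology and closed
under translations. -/
def IsSubshift {A : Type*} [TopologicalSpace A] (X : Set (ℤ × ℤ → A)) : Prop :=
  IsClosed X ∧ ∀ c ∈ X, ∀ t : ℤ × ℤ, Translate t c ∈ X

namespace NivatAux
variable {A : Type*}

lemma translate_translate' (s t : ℤ × ℤ) (c : ℤ × ℤ → A) :
    Translate s (Translate t c) = Translate (s + t) c := by
  funext n; simp [Translate, sub_sub]

lemma translate_zero' (c : ℤ × ℤ → A) : Translate 0 c = c := by funext n; simp [Translate]

lemma continuous_translate [TopologicalSpace A] (t : ℤ × ℤ) :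
    Continuous (fun c : ℤ × ℤ → A => Translate t c) :=
  continuous_pi fun n => continuous_apply (n - t)

lemma translate_mem_orbitClosure [TopologicalSpace A] {c x : ℤ × ℤ → A}
    (hx : x ∈ orbitClosure c) (t : ℤ × ℤ) : Translate t x ∈ orbitClosure c := by
  refine map_mem_closure (continuous_translate t) hx ?_
  rintro y ⟨s, rfl⟩
  exact ⟨t + s, translate_translate' t s c⟩

lemma mem_range_of_mem_orbitClosure [TopologicalSpace A] [DiscreteTopology A]
    {c x : ℤ × ℤ → A} (hx : x ∈ orbitClosure c) (n : ℤ × ℤ) : x n ∈ Set.range c := by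
  have h : x n ∈ closure (Set.range c) := by
    refine map_mem_closure (f := fun y : ℤ × ℤ → A => y n) (continuous_apply n) hx ?_
    rintro y ⟨s, rfl⟩
    exact ⟨n - s, rfl⟩
  rwa [(isClosed_discrete _).closure_eq] at h

lemma inner2_sub (x y u : ℤ × ℤ) : inner2 (x - y) u = inner2 x u - inner2 y u := by
  simp [inner2]; ring

lemma inner2_add (x y u : ℤ × ℤ) : inner2 (x + y) u = inner2 x u + inner2 y u := by
  simp [inner2]; ring

lemma inner2_smul (j : ℤ) (x u : ℤ × ℤ) : inner2 (j • x) u = j * inner2 x u := by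
  simp [inner2, Prod.smul_fst, Prod.smul_snd, smul_eq_mul]; ring

lemma inner2_comm (x u : ℤ × ℤ) : inner2 x u = inner2 u x := by simp [inner2]; ring

lemma normsq_ne_zero {u : ℤ × ℤ} (hu : u ≠ 0) : u.1 * u.1 + u.2 * u.2 ≠ 0 := by
  intro h
  apply hu
  have h1 : u.1 = 0 := by nlinarith [sq_nonneg u.1, sq_nonneg u.2]
  have h2 : u.2 = 0 := by nlinarith [sq_nonneg u.1, sq_nonneg u.2]
  exact Prod.ext h1 h2

lemma inner2_inj {u : ℤ × ℤ} (hu : u ≠ 0) {x y : ℤ × ℤ}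
    (h1 : inner2 x u = inner2 y u) (h2 : inner2 x (perp u) = inner2 y (perp u)) : x = y := by
  simp only [inner2, perp] at h1 h2
  have e1 : (x.1 - y.1) * (u.1 * u.1 + u.2 * u.2) = 0 := by linear_combination u.1 * h1 + u.2 * h2
  have e2 : (x.2 - y.2) * (u.1 * u.1 + u.2 * u.2) = 0 := by linear_combination u.2 * h1 - u.1 * h2
  have hz := normsq_ne_zero hu
  have f1 : x.1 = y.1 := by
    rcases mul_eq_zero.mp e1 with h | h
    · linarith
    · exact absurd h hz
  have f2 : x.2 = y.2 := by
    rcases mul_eq_zero.mp e2 with h | h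
    · linarith
    · exact absurd h hz
  exact Prod.ext f1 f2


lemma diffOp_translate (v t : ℤ × ℤ) (x : ℤ × ℤ → ℤ) :
    diffOp v (Translate t x) = Translate t (diffOp v x) := by
  funext n
  simp only [diffOp, Translate, sub_right_comm]

lemma continuous_diffOp (v : ℤ × ℤ) : Continuous (diffOp v) :=
  continuous_pi fun n => ((continuous_apply (n - v)).sub (continuous_apply n))

lemma continuous_foldr (L : List (ℤ × ℤ)) :
    Continuous (fun x : ℤ × ℤ → ℤ => L.foldr diffOp x) := by
  induction L with
  | nil => exact continuous_id
  | cons w L ih => exact (continuous_diffOp w).comp ih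

lemma foldr_translate (L : List (ℤ × ℤ)) (t : ℤ × ℤ) (x : ℤ × ℤ → ℤ) :
    L.foldr diffOp (Translate t x) = Translate t (L.foldr diffOp x) := by
  induction L with
  | nil => rfl
  | cons w L ih => simp only [List.foldr_cons, ih, diffOp_translate]

lemma translate_zero_fun (t : ℤ × ℤ) : Translate t (0 : ℤ × ℤ → ℤ) = 0 := rfl

lemma foldr_ann_of_mem_orbitClosure {c : ℤ × ℤ → ℤ} (L : List (ℤ × ℤ))
    (hc : L.foldr diffOp c = 0) {x : ℤ × ℤ → ℤ} (hx : x ∈ orbitClosure c) :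
    L.foldr diffOp x = 0 := by
  have hcl : IsClosed {y : ℤ × ℤ → ℤ | L.foldr diffOp y = 0} :=
    isClosed_eq (continuous_foldr L) continuous_const
  have hsub : orbit c ⊆ {y : ℤ × ℤ → ℤ | L.foldr diffOp y = 0} := by
    rintro y ⟨t, rfl⟩
    simp only [Set.mem_setOf_eq, foldr_translate, hc, translate_zero_fun]
  exact closure_minimal hsub hcl hx

lemma diffOp_sub (v : ℤ × ℤ) (x y : ℤ × ℤ → ℤ) :
    diffOp v (x - y) = diffOp v x - diffOp v y := by
  funext n; simp only [diffOp, Pi.sub_apply]; ring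

lemma foldr_sub (L : List (ℤ × ℤ)) (x y : ℤ × ℤ → ℤ) :
    L.foldr diffOp (x - y) = L.foldr diffOp x - L.foldr diffOp y := by
  induction L with
  | nil => rfl
  | cons w L ih => simp only [List.foldr_cons, ih, diffOp_sub]

lemma diffOp_comm (a b : ℤ × ℤ) (x : ℤ × ℤ → ℤ) :
    diffOp a (diffOp b x) = diffOp b (diffOp a x) := by
  funext n; simp only [diffOp, sub_right_comm]; ring

lemma foldr_diffOp_comm (L : List (ℤ × ℤ)) (a : ℤ × ℤ) (x : ℤ × ℤ → ℤ) :
    L.foldr diffOp (diffOp a x) = diffOp a (L.foldr diffOp x) := by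
  induction L with
  | nil => rfl
  | cons w L ih => simp only [List.foldr_cons, ih, diffOp_comm]

/-- Iterated periodicity. -/
lemma periodic_iterate {g : ℤ × ℤ → A} {v : ℤ × ℤ} (h : ∀ z, g (z + v) = g z) :
    ∀ (j : ℤ) (z : ℤ × ℤ), g (z + j • v) = g z := by
  intro j
  induction j using Int.induction_on with
  | zero => intro z; simp
  | succ i ih =>
      intro z
      have : z + ((i : ℤ) + 1) • v = (z + (i : ℤ) • v) + v := by
        rw [add_smul, one_smul, add_assoc]
      rw [this, h, ih]
  | pred i ih =>
      intro z
      have : (z + (-(i : ℤ) - 1) • v) + v = z + (-(i : ℤ)) • v := by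
        rw [sub_smul, one_smul]; abel
      have h2 := h (z + (-(i : ℤ) - 1) • v)
      rw [this] at h2
      rw [← h2, ih]


section PropUp
variable {c : ℤ × ℤ → ℤ} {u : ℤ × ℤ} {k : ℤ}

/-- one-step propagation from the box hypothesis -/
lemma box_step
    (hbox : ∀ d ∈ orbitClosure c, ∀ e ∈ orbitClosure c, Set.EqOn d e (Box u k) → d 0 = e 0)
    {x y : ℤ × ℤ → ℤ} (hx : x ∈ orbitClosure c) (hy : y ∈ orbitClosure c)
    (t : ℤ × ℤ)
    (h : ∀ w : ℤ × ℤ, inner2 t u - k < inner2 w u → inner2 w u < inner2 t u → x w = y w) :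
    x t = y t := by
  have hx' := translate_mem_orbitClosure hx (-t)
  have hy' := translate_mem_orbitClosure hy (-t)
  have := hbox _ hx' _ hy' ?_
  · simpa [Translate] using this
  · intro z hz
    obtain ⟨h1, h2, -, -⟩ := hz
    show x (z - -t) = y (z - -t)
    have hz' : z - -t = z + t := by ring
    rw [hz']
    refine h (z + t) ?_ ?_ <;> rw [inner2_add] <;> linarith

/-- upward propagation: agreement on a slab of `k-1` consecutive levels starting
at `a` propagates to all levels `≥ a`. -/
lemma prop_up
    (hbox : ∀ d ∈ orbitClosure c, ∀ e ∈ orbitClosure c, Set.EqOn d e (Box u k) → d 0 = e 0)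
    {x y : ℤ × ℤ → ℤ} (hx : x ∈ orbitClosure c) (hy : y ∈ orbitClosure c)
    (a : ℤ)
    (hslab : ∀ w : ℤ × ℤ, a ≤ inner2 w u → inner2 w u ≤ a + k - 2 → x w = y w) :
    ∀ w : ℤ × ℤ, a ≤ inner2 w u → x w = y w := by
  have key : ∀ m : ℕ, ∀ w : ℤ × ℤ, inner2 w u < a + k - 1 + m → a ≤ inner2 w u → x w = y w := by
    intro m
    induction m with
    | zero => intro w h1 h2; exact hslab w h2 (by omega)
    | succ m ih =>
        intro w h1 h2
        by_cases hc : inner2 w u < a + k - 1 + m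
        · exact ih w hc h2
        · refine box_step hbox hx hy w ?_
          intro w' hw1 hw2
          refine ih w' (by omega) (by omega)
  intro w hw
  refine key ((inner2 w u - (a + k - 2)).toNat) w ?_ hw
  have := Int.self_le_toNat (inner2 w u - (a + k - 2))
  omega

lemma disagree_below
    (hbox : ∀ d ∈ orbitClosure c, ∀ e ∈ orbitClosure c, Set.EqOn d e (Box u k) → d 0 = e 0)
    {x y : ℤ × ℤ → ℤ} (hx : x ∈ orbitClosure c) (hy : y ∈ orbitClosure c)
    {z₀ : ℤ × ℤ} (hz : x z₀ ≠ y z₀) (a : ℤ) (ha : a ≤ inner2 z₀ u) :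
    ∃ w : ℤ × ℤ, a ≤ inner2 w u ∧ inner2 w u ≤ a + k - 2 ∧ x w ≠ y w := by
  by_contra hcon
  push_neg at hcon
  exact hz (prop_up hbox hx hy a (fun w h1 h2 => hcon w h1 h2) z₀ ha)

end PropUp

/-- a function with support bounded above in the `u`-direction which is periodic
in a direction not perpendicular to `u` vanishes. -/
lemma eq_zero_of_periodic_bdd {u w : ℤ × ℤ} (hw : inner2 w u ≠ 0) (H : ℤ × ℤ → ℤ)
    (hper : ∀ z, H (z + w) = H z) (C : ℤ) (hC : ∀ z, C < inner2 z u → H z = 0) :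
    H = 0 := by
  funext z
  show H z = 0
  by_cases hz : C < inner2 z u
  · exact hC z hz
  · push_neg at hz
    set t := inner2 w u with ht
    set M := C - inner2 z u + 1 with hM
    have hM0 : 0 < M := by omega
    have htt : 1 ≤ t * t := by rcases lt_or_gt_of_ne hw with h | h <;> nlinarith
    have hlev : inner2 (z + (t * M) • w) u = inner2 z u + t * t * M := by
      rw [inner2_add, inner2_smul]; ring
    have : H (z + (t * M) • w) = 0 := by
      refine hC _ ?_
      rw [hlev]
      nlinarith
    rw [← this, periodic_iterate hper]

lemma foldr_support {u : ℤ × ℤ} (L : List (ℤ × ℤ)) (h : ℤ × ℤ → ℤ) (C : ℤ)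
    (hC : ∀ z, C < inner2 z u → h z = 0) :
    ∀ z, C + (L.map (fun w => |inner2 w u|)).sum < inner2 z u → L.foldr diffOp h z = 0 := by
  induction L with
  | nil => simpa using hC
  | cons w L ih =>
      intro z hz
      simp only [List.map_cons, List.sum_cons, List.foldr_cons] at hz ⊢
      have hsum : 0 ≤ (L.map (fun w => |inner2 w u|)).sum := by
        apply List.sum_nonneg
        intro a ha
        simp only [List.mem_map] at ha
        obtain ⟨b, -, rfl⟩ := ha
        exact abs_nonneg _
      show L.foldr diffOp h (z - w) - L.foldr diffOp h z = 0
      have h1 : L.foldr diffOp h (z - w) = 0 := by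
        refine ih (z - w) ?_
        rw [inner2_sub]
        have := abs_le.mp (le_refl |inner2 w u|)
        omega
      have h2 : L.foldr diffOp h z = 0 := by
        refine ih z ?_
        have : 0 ≤ |inner2 w u| := abs_nonneg _
        omega
      rw [h1, h2, sub_zero]

lemma zero_of_bdd_support {u : ℤ × ℤ} :
    ∀ (L : List (ℤ × ℤ)), (∀ w ∈ L, inner2 w u ≠ 0) →
    ∀ (h : ℤ × ℤ → ℤ) (C : ℤ), (∀ z, C < inner2 z u → h z = 0) →
    L.foldr diffOp h = 0 → h = 0 := by
  intro L
  induction L with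
  | nil => intro _ h C _ hf; exact hf
  | cons w L ih =>
      intro hL h C hC hf
      simp only [List.foldr_cons] at hf
      set H := L.foldr diffOp h with hH
      have hper : ∀ z, H (z + (-w)) = H z := by
        intro z
        have h1 := congrFun hf z
        simp only [diffOp, Pi.zero_apply] at h1
        have h3 : z + -w = z - w := by ring
        rw [h3]
        omega
      have hw' : inner2 (-w) u ≠ 0 := by
        have hwu : inner2 w u ≠ 0 := hL w List.mem_cons_self
        have : inner2 (-w) u = -inner2 w u := by simp [inner2]; ring
        omega
      have hH0 : H = 0 :=
        eq_zero_of_periodic_bdd hw' H hper (C + (L.map (fun w => |inner2 w u|)).sum)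
          (foldr_support L h C hC)
      exact ih (fun a ha => hL a (List.mem_cons_of_mem w ha)) h C hC hH0


lemma tendsto_config_iff {ι : Type*} (x : ℕ → ι → ℤ) (x' : ι → ℤ) :
    Filter.Tendsto x Filter.atTop (nhds x') ↔ ∀ i, ∀ᶠ m in Filter.atTop, x m i = x' i := by
  rw [tendsto_pi_nhds]
  refine forall_congr' fun i => ?_
  have : nhds (x' i) = pure (x' i) := by rw [nhds_discrete]
  rw [this, Filter.tendsto_pure]

lemma exists_limit_subseq {ι : Type*} [Countable ι] (S : Set ℤ) (hS : S.Finite)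
    (x : ℕ → ι → ℤ) (hx : ∀ m i, x m i ∈ S) :
    ∃ ρ : ℕ → ℕ, StrictMono ρ ∧ ∃ x' : ι → ℤ,
      Filter.Tendsto (fun m => x (ρ m)) Filter.atTop (nhds x') := by
  have hK : IsCompact (Set.pi Set.univ fun _ : ι => S) :=
    isCompact_univ_pi fun _ => hS.isCompact
  have hseq := hK.isSeqCompact (x := x) (fun m => by
    rw [Set.mem_univ_pi]; exact fun i => hx m i)
  obtain ⟨x', -, ρ, hρ, hlim⟩ := hseq
  exact ⟨ρ, hρ, x', hlim⟩

lemma synd_limit {u v : ℤ × ℤ} (hu : u ≠ 0) (hp : inner2 v (perp u) ≠ 0)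
    (huv : inner2 v u = 0)
    (g g' : ℤ × ℤ → ℤ) (hper : ∀ z, g (z + v) = g z)
    (s : ℕ → ℤ × ℤ)
    (hconv : ∀ n : ℤ × ℤ, ∀ᶠ m in Filter.atTop, g (n - s m) = g' n)
    (k a : ℤ)
    (hfreq : ∀ᶠ m in Filter.atTop, ∃ z : ℤ × ℤ,
      a ≤ inner2 z u + inner2 (s m) u ∧ inner2 z u + inner2 (s m) u ≤ a + k - 2 ∧ g z ≠ 0) :
    ∃ w : ℤ × ℤ, a ≤ inner2 w u ∧ inner2 w u ≤ a + k - 2 ∧ g' w ≠ 0 := by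
  set P := |inner2 v (perp u)| with hP
  have hP0 : 0 < P := abs_pos.mpr hp
  set F := {w : ℤ × ℤ | (a ≤ inner2 w u ∧ inner2 w u ≤ a + k - 2) ∧
      0 ≤ inner2 w (perp u) ∧ inner2 w (perp u) < P} with hF
  have hFfin : F.Finite := by
    have himg : ((fun w : ℤ × ℤ => (inner2 w u, inner2 w (perp u))) '' F).Finite := by
      apply Set.Finite.subset (Set.finite_Icc (a, 0) (a + k - 2, P - 1))
      rintro _ ⟨w, hw, rfl⟩
      obtain ⟨⟨h1, h2⟩, h3, h4⟩ := hw
      rw [Set.mem_Icc]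
      constructor <;> rw [Prod.le_def] <;> constructor <;> simp <;> omega
    refine Set.Finite.of_finite_image himg ?_
    intro w1 _ w2 _ heq
    exact inner2_inj hu (congrArg Prod.fst heq) (congrArg Prod.snd heq)
  have hall : ∀ᶠ m in Filter.atTop, ∀ w ∈ F, g (w - s m) = g' w :=
    (Filter.eventually_all_finite hFfin).mpr (fun w _ => hconv w)
  obtain ⟨m, hm1, hm2⟩ := (hall.and hfreq).exists
  obtain ⟨z, hz1, hz2, hz3⟩ := hm2
  set X := inner2 z (perp u) + inner2 (s m) (perp u) with hX
  have hdvd : ∃ j : ℤ, j * inner2 v (perp u) = X % P - X := by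
    rcases abs_cases (inner2 v (perp u)) with ⟨h1, -⟩ | ⟨h1, -⟩
    · refine ⟨-(X / P), ?_⟩
      rw [Int.emod_def, hP, h1]; ring
    · refine ⟨X / P, ?_⟩
      rw [Int.emod_def, hP, h1]; ring
  obtain ⟨j, hj⟩ := hdvd
  set w := z + j • v + s m with hw
  have hlev : inner2 w u = inner2 z u + inner2 (s m) u := by
    rw [hw, inner2_add, inner2_add, inner2_smul, huv]; ring
  have hcross : inner2 w (perp u) = X % P := by
    rw [hw, inner2_add, inner2_add, inner2_smul, hj]
    rw [hX]; ring
  have hwF : w ∈ F := by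
    refine ⟨⟨by omega, by omega⟩, ?_⟩
    rw [hcross]
    exact ⟨Int.emod_nonneg X (ne_of_gt hP0), Int.emod_lt_of_pos X hP0⟩
  have hgw : g (w - s m) = g' w := hm1 w hwF
  have heq : w - s m = z + j • v := by rw [hw]; ring
  rw [heq, periodic_iterate hper] at hgw
  exact ⟨w, by omega, by omega, by rw [← hgw]; exact hz3⟩

lemma sub_periodic {v : ℤ × ℤ} {x y : ℤ × ℤ → ℤ} (h : diffOp v x = diffOp v y) (z : ℤ × ℤ) :
    x (z + v) - y (z + v) = x z - y z := by
  have h1 := congrFun h (z + v)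
  simp only [diffOp] at h1
  have h2 : z + v - v = z := by ring
  rw [h2] at h1
  omega

end NivatAux

open NivatAux

/-- Setting of Lemma 5 of the paper: `c : ℤ² → ℤ` takes finitely
many values and is annihilated by `(τ^{v} − id) ∘ (τ^{v₂} − id) ∘ ⋯ ∘ (τ^{v_m} − id)`
with `v, v₂, …, v_m` pairwise linearly independent; `u` is a one-sided direction of
determinism of the orbit closure `X` of `c`, perpendicular to `v`; the box `B_u^k`
(with `k > |⟨u^⊥,v⟩|`) determines cell `0` in `X`; `c₁, …, c_N ∈ X` is a maximal
family of pairwise distinct configurations with equal images under `τ^v − id`, and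
`d_i = lim_j τ^{n_j·u}(c_i)` exist. Then the orbit closure of `d = d₁` is
deterministic in direction `−u`. -/

theorem limit_orbitClosure_deterministic_backwards
    (c : ℤ × ℤ → ℤ) (hfin : (Set.range c).Finite)
    (v : ℤ × ℤ) (rest : List (ℤ × ℤ))
    (hpair : (v :: rest).Pairwise (fun a b => a.1 * b.2 - a.2 * b.1 ≠ 0))
    (hann : (v :: rest).foldr diffOp c = 0)
    (u : ℤ × ℤ) (hu : u ≠ 0)
    (hdetu : DeterministicIn (orbitClosure c) u)
    (hnotdet : ¬ DeterministicIn (orbitClosure c) (-u))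
    (huv : inner2 u v = 0)
    (k : ℤ) (hk : |inner2 (perp u) v| < k)
    (hbox : ∀ d ∈ orbitClosure c, ∀ e ∈ orbitClosure c,
      Set.EqOn d e (Box u k) → d 0 = e 0)
    (N : ℕ) (hN : 0 < N)
    (cs : Fin N → (ℤ × ℤ → ℤ)) (hcs : ∀ i, cs i ∈ orbitClosure c)
    (hinj : Function.Injective cs)
    (hdiff : ∀ i j, diffOp v (cs i) = diffOp v (cs j))
    (hmax : ¬ ∃ cs' : Fin (N + 1) → (ℤ × ℤ → ℤ), (∀ i, cs' i ∈ orbitClosure c) ∧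
      Function.Injective cs' ∧ ∀ i j, diffOp v (cs' i) = diffOp v (cs' j))
    (ns : ℕ → ℕ) (hns : StrictMono ns)
    (ds : Fin N → (ℤ × ℤ → ℤ))
    (hlim : ∀ i, Filter.Tendsto (fun j => Translate ((ns j : ℤ) • u) (cs i))
      Filter.atTop (nhds (ds i))) :
    DeterministicIn (orbitClosure (ds ⟨0, hN⟩)) (-u) := by
  classical
  set i0 : Fin N := ⟨0, hN⟩ with hi0
  set d := ds i0 with hd
  have hXclosed : IsClosed (orbitClosure c) := isClosed_closure
  have hdsX : ∀ i, ds i ∈ orbitClosure c := by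
    intro i
    refine hXclosed.mem_of_tendsto (hlim i) ?_
    exact Filter.Eventually.of_forall fun j => translate_mem_orbitClosure (hcs i) _
  have hdX : orbitClosure d ⊆ orbitClosure c := by
    refine closure_minimal ?_ hXclosed
    rintro y ⟨t, rfl⟩
    exact translate_mem_orbitClosure (hdsX _) t
  intro e he e' he' heq
  have heX : e ∈ orbitClosure c := hdX he
  have heX' : e' ∈ orbitClosure c := hdX he'
  by_contra hne
  have hsupp : ∀ z : ℤ × ℤ, 0 < inner2 z u → e z = e' z := by
    intro z hz
    apply heq
    show inner2 z (-u) < 0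
    have hzz : inner2 z (-u) = -inner2 z u := by simp [inner2]; ring
    omega
  by_cases hv : v = 0
  · -- degenerate case: `τ^v - id = 0`, the subshift is finite and periodic
    have hper : ∀ x ∈ orbitClosure c, ∀ t : ℤ × ℤ,
        ∃ m : ℤ, m ≠ 0 ∧ ∀ (r : ℤ) (z : ℤ × ℤ), x (z + (r * m) • t) = x z := by
      intro x hx t
      have hni : ¬ Function.Injective (fun i : Fin (N + 1) => Translate ((i : ℤ) • t) x) := by
        intro hinj'
        exact hmax ⟨_, fun i => translate_mem_orbitClosure hx _, hinj', fun i j => by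
          subst hv; funext n; simp [diffOp]⟩
      rw [Function.not_injective_iff] at hni
      obtain ⟨i, j, hij, hne'⟩ := hni
      have hji : ((i : ℤ) - (j : ℤ)) ≠ 0 := by
        intro hc
        apply hne'
        have : (i : ℤ) = (j : ℤ) := by omega
        exact Fin.ext (by exact_mod_cast this)
      refine ⟨(i : ℤ) - (j : ℤ), hji, ?_⟩
      have hfix : Translate (((i : ℤ) - (j : ℤ)) • t) x = x := by
        have h1 : Translate (-((j : ℤ) • t)) (Translate ((i : ℤ) • t) x)
            = Translate (-((j : ℤ) • t)) (Translate ((j : ℤ) • t) x) := by rw [hij]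
        rw [translate_translate', translate_translate'] at h1
        have e1 : -((j : ℤ) • t) + (i : ℤ) • t = ((i : ℤ) - (j : ℤ)) • t := by
          rw [sub_smul]; ring
        have e2 : -((j : ℤ) • t) + (j : ℤ) • t = 0 := by ring
        rw [e1, e2, translate_zero'] at h1
        exact h1
      have hstep : ∀ z : ℤ × ℤ, x (z + ((i : ℤ) - (j : ℤ)) • t) = x z := by
        intro z
        have := congrFun hfix (z + ((i : ℤ) - (j : ℤ)) • t)
        simp only [Translate] at this
        have e3 : z + ((i : ℤ) - (j : ℤ)) • t - ((i : ℤ) - (j : ℤ)) • t = z := by ring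
        rw [e3] at this
        exact this.symm
      intro r z
      rw [← smul_smul]
      exact periodic_iterate hstep r z
    obtain ⟨t, ht⟩ : ∃ t : ℤ × ℤ, inner2 t u ≠ 0 := by
      by_cases h1 : u.1 ≠ 0
      · exact ⟨(1, 0), by simpa [inner2] using h1⟩
      · push_neg at h1
        have h2 : u.2 ≠ 0 := fun h2 => hu (Prod.ext h1 h2)
        exact ⟨(0, 1), by simpa [inner2] using h2⟩
    obtain ⟨m1, hm1, hp1⟩ := hper e heX t
    obtain ⟨m2, hm2, hp2⟩ := hper e' heX' t
    apply hne
    funext z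
    set T := inner2 t u with hT
    set M := m1 * m2 with hM
    set B := |inner2 z u| + 1 with hB
    set j := M * T * B with hj
    have hM0 : M ≠ 0 := mul_ne_zero hm1 hm2
    have hQ : 1 ≤ (M * T) * (M * T) := by
      have : M * T ≠ 0 := mul_ne_zero hM0 ht
      rcases lt_or_gt_of_ne this with h | h <;> nlinarith
    have hBpos : -inner2 z u < B := by
      have := neg_abs_le (inner2 z u)
      omega
    have hBpos' : 0 < B := by positivity
    have hlev : 0 < inner2 (z + (j * M) • t) u := by
      rw [inner2_add, inner2_smul]
      have e4 : j * M * T = ((M * T) * (M * T)) * B := by rw [hj]; ring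
      have e5 : B ≤ ((M * T) * (M * T)) * B := le_mul_of_one_le_left hBpos'.le hQ
      rw [e4]
      omega
    have he1 : e (z + (j * M) • t) = e z := by
      have e6 : j * M = (j * m2) * m1 := by rw [hM]; ring
      rw [e6]
      exact hp1 (j * m2) z
    have he2 : e' (z + (j * M) • t) = e' z := by
      have e6 : j * M = (j * m1) * m2 := by rw [hM]; ring
      rw [e6]
      exact hp2 (j * m1) z
    rw [← he1, ← he2]
    exact hsupp _ hlev
  · -- main case : v ≠ 0
    have hvu : inner2 v u = 0 := by rw [inner2_comm]; exact huv
    have hp : inner2 v (perp u) ≠ 0 := by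
      intro hp0
      apply hv
      refine inner2_inj hu (x := v) (y := 0) ?_ ?_
      · rw [hvu]; simp [inner2]
      · rw [hp0]; simp [inner2]
    have hlim' : ∀ i, ∀ n : ℤ × ℤ, ∀ᶠ m in Filter.atTop,
        cs i (n - (ns m : ℤ) • u) = ds i n := by
      intro i n
      exact (tendsto_config_iff _ _).mp (hlim i) n
    have hQu : 1 ≤ inner2 u u := by
      have h0 := normsq_ne_zero hu
      have h1 : 0 ≤ u.1 * u.1 + u.2 * u.2 := by nlinarith
      show 1 ≤ u.1 * u.1 + u.2 * u.2
      omega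
    -- Step A : the limits `ds i` differ "syndetically in every window"
    have hSyndP : ∀ i j, i ≠ j → ∀ a : ℤ,
        ∃ w : ℤ × ℤ, a ≤ inner2 w u ∧ inner2 w u ≤ a + k - 2 ∧ ds i w ≠ ds j w := by
      intro i j hij a
      have hgper : ∀ z, cs i (z + v) - cs j (z + v) = cs i z - cs j z :=
        sub_periodic (hdiff i j)
      have hne' : cs i ≠ cs j := fun h => hij (hinj h)
      obtain ⟨z₀, hz₀⟩ := Function.ne_iff.mp hne'
      have hfreq : ∀ᶠ m in Filter.atTop, ∃ z : ℤ × ℤ,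
          a ≤ inner2 z u + inner2 ((ns m : ℤ) • u) u ∧
          inner2 z u + inner2 ((ns m : ℤ) • u) u ≤ a + k - 2 ∧ cs i z - cs j z ≠ 0 := by
        filter_upwards [Filter.eventually_ge_atTop ((a - inner2 z₀ u).toNat)] with m hm
        have hlev : inner2 ((ns m : ℤ) • u) u = (ns m : ℤ) * inner2 u u := inner2_smul _ _ _
        have hm1 : (m : ℤ) ≤ (ns m : ℤ) := by exact_mod_cast hns.le_apply
        have hm2 : a - inner2 z₀ u ≤ (m : ℤ) := by
          have h3 := Int.self_le_toNat (a - inner2 z₀ u)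
          have h4 : ((a - inner2 z₀ u).toNat : ℤ) ≤ (m : ℤ) := by exact_mod_cast hm
          omega
        have hbnd : a - (ns m : ℤ) * inner2 u u ≤ inner2 z₀ u := by nlinarith
        obtain ⟨w, h1, h2, h3⟩ := disagree_below hbox (hcs i) (hcs j) hz₀
          (a - (ns m : ℤ) * inner2 u u) hbnd
        refine ⟨w, by linarith, by linarith, fun hc => h3 (by omega)⟩
      have hconv : ∀ n : ℤ × ℤ, ∀ᶠ m in Filter.atTop,
          cs i (n - (ns m : ℤ) • u) - cs j (n - (ns m : ℤ) • u) = ds i n - ds j n := by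
        intro n
        filter_upwards [hlim' i n, hlim' j n] with m h1 h2
        rw [h1, h2]
      obtain ⟨w, h1, h2, h3⟩ := synd_limit hu hp hvu (fun z => cs i z - cs j z)
        (fun n => ds i n - ds j n) hgper (fun m => (ns m : ℤ) • u) hconv k a hfreq
      refine ⟨w, h1, h2, fun hc => h3 ?_⟩
      show ds i w - ds j w = 0
      omega
    -- a sequence of translates of `d` converging to `e`
    have he2 : e ∈ closure (orbit d) := he
    obtain ⟨y, hy, hylim⟩ := mem_closure_iff_seq_limit.mp he2
    choose s hs using hy
    have hylim' : Filter.Tendsto (fun m => Translate (s m) d) Filter.atTop (nhds e) :=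
      Filter.Tendsto.congr (fun m => hs m) hylim
    -- simultaneous limits of translates of all the `ds i`
    have hvals : ∀ (m : ℕ) (q : Fin N × (ℤ × ℤ)), Translate (s m) (ds q.1) q.2 ∈ Set.range c :=
      fun m q => mem_range_of_mem_orbitClosure
        (translate_mem_orbitClosure (hdsX q.1) (s m)) q.2
    obtain ⟨ρ, hρ, E, hE⟩ := exists_limit_subseq (Set.range c) hfin
      (fun m (q : Fin N × (ℤ × ℤ)) => Translate (s m) (ds q.1) q.2) hvals
    set es : Fin N → (ℤ × ℤ → ℤ) := fun i n => E (i, n) with hes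
    have hEconv : ∀ i, ∀ n : ℤ × ℤ, ∀ᶠ m in Filter.atTop, ds i (n - s (ρ m)) = es i n := by
      intro i n
      exact (tendsto_config_iff _ _).mp hE (i, n)
    have hesX : ∀ i, es i ∈ orbitClosure c := by
      intro i
      have htd : Filter.Tendsto (fun m => Translate (s (ρ m)) (ds i)) Filter.atTop
          (nhds (es i)) := by
        rw [tendsto_config_iff]
        intro n; exact hEconv i n
      exact hXclosed.mem_of_tendsto htd
        (Filter.Eventually.of_forall fun m => translate_mem_orbitClosure (hdsX i) _)
    have hesi0 : es i0 = e := by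
      have h1 : Filter.Tendsto (fun m => Translate (s (ρ m)) d) Filter.atTop
          (nhds (es i0)) := by
        rw [tendsto_config_iff]
        intro n; exact hEconv i0 n
      have h2 : Filter.Tendsto (fun m => Translate (s (ρ m)) d) Filter.atTop (nhds e) :=
        hylim'.comp hρ.tendsto_atTop
      exact tendsto_nhds_unique h1 h2
    -- common image under τ^v - id
    have hGds : ∀ i j, diffOp v (ds i) = diffOp v (ds j) := by
      intro i j
      funext n
      obtain ⟨m, ha, hb, hc', hd'⟩ := ((hlim' i (n - v)).and ((hlim' i n).and
        ((hlim' j (n - v)).and (hlim' j n)))).exists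
      have hd0 := congrFun (hdiff i j) (n - (ns m : ℤ) • u)
      simp only [diffOp] at hd0 ⊢
      have hcomm : n - (ns m : ℤ) • u - v = n - v - (ns m : ℤ) • u := by ring
      rw [hcomm] at hd0
      omega
    have hGes : ∀ i j, diffOp v (es i) = diffOp v (es j) := by
      intro i j
      funext n
      obtain ⟨m, ha, hb, hc', hd'⟩ := ((hEconv i (n - v)).and ((hEconv i n).and
        ((hEconv j (n - v)).and (hEconv j n)))).exists
      have hd0 := congrFun (hGds i j) (n - s (ρ m))
      simp only [diffOp] at hd0 ⊢
      have hcomm : n - s (ρ m) - v = n - v - s (ρ m) := by ring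
      rw [hcomm] at hd0
      omega
    -- Step B : the limits `es i` also differ syndetically
    have hSyndQ : ∀ i j, i ≠ j → ∀ a : ℤ,
        ∃ w : ℤ × ℤ, a ≤ inner2 w u ∧ inner2 w u ≤ a + k - 2 ∧ es i w ≠ es j w := by
      intro i j hij a
      have hgper : ∀ z, ds i (z + v) - ds j (z + v) = ds i z - ds j z :=
        sub_periodic (hGds i j)
      have hfreq : ∀ᶠ m in Filter.atTop, ∃ z : ℤ × ℤ,
          a ≤ inner2 z u + inner2 (s (ρ m)) u ∧
          inner2 z u + inner2 (s (ρ m)) u ≤ a + k - 2 ∧ ds i z - ds j z ≠ 0 := by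
        refine Filter.Eventually.of_forall fun m => ?_
        obtain ⟨z, h1, h2, h3⟩ := hSyndP i j hij (a - inner2 (s (ρ m)) u)
        exact ⟨z, by linarith, by linarith, fun hc => h3 (by omega)⟩
      have hconv : ∀ n : ℤ × ℤ, ∀ᶠ m in Filter.atTop,
          ds i (n - s (ρ m)) - ds j (n - s (ρ m)) = es i n - es j n := by
        intro n
        filter_upwards [hEconv i n, hEconv j n] with m h1 h2
        rw [h1, h2]
      obtain ⟨w, h1, h2, h3⟩ := synd_limit hu hp hvu (fun z => ds i z - ds j z)
        (fun n => es i n - es j n) hgper (fun m => s (ρ m)) hconv k a hfreq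
      refine ⟨w, h1, h2, fun hc => h3 ?_⟩
      show es i w - es j w = 0
      omega
    -- the difference e - e' is v-periodic
    have hannX : ∀ x ∈ orbitClosure c, (v :: rest).foldr diffOp x = 0 := fun x hx =>
      foldr_ann_of_mem_orbitClosure _ hann hx
    have hrest : ∀ w ∈ rest, inner2 w u ≠ 0 := by
      intro w hw hwu
      have hdet : v.1 * w.2 - v.2 * w.1 ≠ 0 := (List.pairwise_cons.mp hpair).1 w hw
      apply hdet
      have hv1 : v.1 * u.1 + v.2 * u.2 = 0 := hvu
      have hw1 : w.1 * u.1 + w.2 * u.2 = 0 := hwu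
      have h1 : (v.1 * w.2 - v.2 * w.1) * u.1 = 0 := by linear_combination w.2 * hv1 - v.2 * hw1
      have h2 : (v.1 * w.2 - v.2 * w.1) * u.2 = 0 := by linear_combination v.1 * hw1 - w.1 * hv1
      rcases mul_eq_zero.mp h1 with h | hu1
      · exact h
      rcases mul_eq_zero.mp h2 with h | hu2
      · exact h
      exact absurd (Prod.ext hu1 hu2) hu
    set f : ℤ × ℤ → ℤ := e - e' with hf
    have hfsupp : ∀ z, 0 < inner2 z u → f z = 0 := by
      intro z hz
      simp only [hf, Pi.sub_apply]
      rw [hsupp z hz]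
      ring
    have hdfsupp : ∀ z, 0 < inner2 z u → diffOp v f z = 0 := by
      intro z hz
      have h1 : inner2 (z - v) u = inner2 z u := by rw [inner2_sub, hvu]; ring
      show f (z - v) - f z = 0
      rw [hfsupp z hz, hfsupp (z - v) (by omega), sub_zero]
    have hfoldf : rest.foldr diffOp (diffOp v f) = 0 := by
      rw [foldr_diffOp_comm]
      have h1 : (v :: rest).foldr diffOp f = 0 := by
        rw [hf, foldr_sub, hannX e heX, hannX e' heX', sub_zero]
      exact h1
    have hfper : diffOp v f = 0 :=
      zero_of_bdd_support rest hrest (diffOp v f) 0 hdfsupp hfoldf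
    have hde' : diffOp v e' = diffOp v (es i0) := by
      rw [hesi0]
      funext n
      have h0 := congrFun hfper n
      simp only [hf, diffOp, Pi.sub_apply, Pi.zero_apply] at h0 ⊢
      omega
    -- e' is distinct from all the es i
    have hee' : ∀ i : Fin N, es i ≠ e' := by
      intro i hc
      by_cases hi : i = i0
      · subst hi
        rw [hesi0] at hc
        exact hne hc
      · obtain ⟨w, h1, h2, h3⟩ := hSyndQ i0 i (fun hcc => hi hcc.symm) 1
        apply h3
        rw [hesi0, hc]
        exact hsupp w (by omega)
    have hesne : ∀ i j : Fin N, i ≠ j → es i ≠ es j := by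
      intro i j hij h
      obtain ⟨w, -, -, hw⟩ := hSyndQ i j hij 0
      exact hw (congrFun h w)
    -- contradiction with maximality
    apply hmax
    refine ⟨fun i : Fin (N + 1) => if h : (i : ℕ) < N then es ⟨(i : ℕ), h⟩ else e', ?_, ?_, ?_⟩
    · intro i
      show (if h : (i : ℕ) < N then es ⟨(i : ℕ), h⟩ else e') ∈ orbitClosure c
      by_cases h : (i : ℕ) < N
      · rw [dif_pos h]; exact hesX _
      · rw [dif_neg h]; exact heX'
    · intro i j hij
      replace hij : (if h : (i : ℕ) < N then es ⟨(i : ℕ), h⟩ else e')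
          = (if h : (j : ℕ) < N then es ⟨(j : ℕ), h⟩ else e') := hij
      by_cases h1 : (i : ℕ) < N <;> by_cases h2 : (j : ℕ) < N
      · rw [dif_pos h1, dif_pos h2] at hij
        by_contra hne2
        refine hesne ⟨(i : ℕ), h1⟩ ⟨(j : ℕ), h2⟩ ?_ hij
        intro hcc
        apply hne2
        have hval : (i : ℕ) = (j : ℕ) := by simpa [Fin.mk.injEq] using hcc
        exact Fin.ext hval
      · rw [dif_pos h1, dif_neg h2] at hij
        exact absurd hij (hee' _)
      · rw [dif_neg h1, dif_pos h2] at hij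
        exact absurd hij.symm (hee' _)
      · exact Fin.ext (by omega)
    · intro i j
      show diffOp v (if h : (i : ℕ) < N then es ⟨(i : ℕ), h⟩ else e')
          = diffOp v (if h : (j : ℕ) < N then es ⟨(j : ℕ), h⟩ else e')
      by_cases h1 : (i : ℕ) < N <;> by_cases h2 : (j : ℕ) < N
      · rw [dif_pos h1, dif_pos h2]; exact hGes _ _
      · rw [dif_pos h1, dif_neg h2, hde']; exact hGes _ _
      · rw [dif_neg h1, dif_pos h2, hde']; exact hGes _ _
      · rw [dif_neg h1, dif_neg h2]
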